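/- Let Z(F) = tr(GᵀF(FᵀF + εI)⁻¹FᵀG) viewed as a function of F ∈ ℝ^{T×V} with G fixed and GᵀG = I. Writing R = (FᵀF+εI)⁻¹FᵀG, the gradient of Z with respect to F satisfies ∂Z/∂F = 2GRᵀ − 2FRRᵀ, equivalently ∂Z/∂Fᵀ = 2RGᵀ − 2RRᵀFᵀ. -/

import Mathlib

/-!
Differentiate along the line `F + tH`. The product rule and `d(A⁻¹) = -A⁻¹ dA A⁻¹` give the
derivative of `Gᵀ F (FᵀF + εI)⁻¹ Fᵀ G`, and since `(FᵀF + εI)⁻¹` is symmetric it equals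
`GᵀHR + RᵀHᵀG - Rᵀ(HᵀF + FᵀH)R`. Cyclicity and transpose invariance of the trace turn the trace
of this matrix into `tr((2GRᵀ - 2FRRᵀ)ᵀ H)`. The inverse exists and is differentiable because
`FᵀF + εI` is positive definite.
-/

open Matrix

-- Derivatives into finite-dimensional spaces do not depend on the norm; the `ℓ∞` operator norm
-- is used because it is submultiplicative on rectangular matrices.
attribute [local instance] Matrix.linftyOpNormedAddCommGroup Matrix.linftyOpNormedSpace
  Matrix.linftyOpNormedRing Matrix.linftyOpNormedAlgebra

variable {l m n : Type*} [Fintype l] [Fintype m] [Fintype n]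

theorem Matrix.isBoundedBilinearMap_mul :
    IsBoundedBilinearMap ℝ (fun p : Matrix l m ℝ × Matrix m n ℝ => p.1 * p.2) where
  add_left := Matrix.add_mul
  smul_left := Matrix.smul_mul
  add_right := Matrix.mul_add
  smul_right c A B := Matrix.mul_smul A c B
  bound := ⟨1, one_pos, fun A B => by simpa using linfty_opNorm_mul A B⟩

section Curves

variable {x : ℝ}

theorem HasDerivAt.matrix_mul {f : ℝ → Matrix l m ℝ} {g : ℝ → Matrix m n ℝ}
    {f' : Matrix l m ℝ} {g' : Matrix m n ℝ} (hf : HasDerivAt f f' x) (hg : HasDerivAt g g' x) :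
    HasDerivAt (fun t => f t * g t) (f' * g x + f x * g') x := by
  have h := (isBoundedBilinearMap_mul.hasFDerivAt (f x, g x)).comp_hasDerivAt x (hf.prodMk hg)
  rw [IsBoundedBilinearMap.deriv_apply] at h
  exact h.congr_deriv (add_comm _ _)

theorem HasDerivAt.matrix_transpose {f : ℝ → Matrix m n ℝ} {f' : Matrix m n ℝ}
    (hf : HasDerivAt f f' x) : HasDerivAt (fun t => (f t)ᵀ) f'ᵀ x :=
  (transposeLinearEquiv m n ℝ ℝ).toLinearMap.toContinuousLinearMap.hasFDerivAt.comp_hasDerivAt x hf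

theorem HasDerivAt.matrix_trace {f : ℝ → Matrix n n ℝ} {f' : Matrix n n ℝ}
    (hf : HasDerivAt f f' x) : HasDerivAt (fun t => (f t).trace) f'.trace x :=
  (traceLinearMap n ℝ ℝ).toContinuousLinearMap.hasFDerivAt.comp_hasDerivAt x hf

theorem HasDerivAt.matrix_inv [DecidableEq n] {f : ℝ → Matrix n n ℝ} {f' : Matrix n n ℝ}
    (hf : HasDerivAt f f' x) (hx : IsUnit (f x).det) :
    HasDerivAt (fun t => (f t)⁻¹) (-((f x)⁻¹ * f' * (f x)⁻¹)) x := by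
  obtain ⟨u, hu⟩ := (isUnit_iff_isUnit_det _).2 hx
  have h := (hu ▸ hasFDerivAt_ringInverse (𝕜 := ℝ) u).comp_hasDerivAt x hf
  simp only [nonsing_inv_eq_ringInverse]
  refine h.congr_deriv ?_
  simp [← hu, ContinuousLinearMap.mulLeftRight_apply, mul_assoc]

end Curves

namespace Matrix

variable [DecidableEq n] {ε : ℝ}

def regularizedGram (ε : ℝ) (F : Matrix m n ℝ) : Matrix n n ℝ :=
  Fᵀ * F + ε • 1

theorem transpose_inv_regularizedGram (F : Matrix m n ℝ) :
    (regularizedGram ε F)⁻¹ᵀ = (regularizedGram ε F)⁻¹ := by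
  simp [regularizedGram, transpose_nonsing_inv, transpose_add]

theorem posDef_regularizedGram (F : Matrix m n ℝ) (hε : 0 < ε) :
    (regularizedGram ε F).PosDef := by
  have hgram := posSemidef_conjTranspose_mul_self F
  rw [conjTranspose_eq_transpose_of_trivial] at hgram
  exact PosDef.posSemidef_add hgram (PosDef.one.smul hε)

end Matrix

theorem HasDerivAt.transpose_mul_regularizedProjection_mul [DecidableEq n] {ε x : ℝ}
    {f : ℝ → Matrix m n ℝ} {f' : Matrix m n ℝ} (G : Matrix m l ℝ) {R : Matrix n l ℝ}
    (hf : HasDerivAt f f' x) (hε : 0 < ε)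
    (hR : R = (regularizedGram ε (f x))⁻¹ * ((f x)ᵀ * G)) :
    HasDerivAt (fun t => Gᵀ * (f t * (regularizedGram ε (f t))⁻¹ * (f t)ᵀ) * G)
      (Gᵀ * f' * R + Rᵀ * f'ᵀ * G - Rᵀ * (f'ᵀ * f x + (f x)ᵀ * f') * R) x := by
  have hgram : HasDerivAt (fun t => regularizedGram ε (f t)) (f'ᵀ * f x + (f x)ᵀ * f') x :=
    (hf.matrix_transpose.matrix_mul hf).add_const _
  have hinv := hgram.matrix_inv
    ((isUnit_iff_isUnit_det _).1 (posDef_regularizedGram (f x) hε).isUnit)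
  have hproj := (hf.matrix_mul hinv).matrix_mul hf.matrix_transpose
  have h := ((hasDerivAt_const x Gᵀ).matrix_mul hproj).matrix_mul (hasDerivAt_const x G)
  refine h.congr_deriv ?_
  have hRt : Rᵀ = Gᵀ * f x * (regularizedGram ε (f x))⁻¹ := by
    simp [hR, transpose_mul, transpose_inv_regularizedGram, Matrix.mul_assoc]
  rw [hRt, hR]
  simp only [Matrix.zero_mul, Matrix.mul_zero, zero_add, add_zero, Matrix.mul_add,
    Matrix.add_mul, Matrix.mul_neg, Matrix.neg_mul, Matrix.mul_assoc]
  abel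

theorem Matrix.trace_variation_eq_trace_transpose_mul (G : Matrix m l ℝ) (F H : Matrix m n ℝ)
    (R : Matrix n l ℝ) :
    trace (Gᵀ * H * R + Rᵀ * Hᵀ * G - Rᵀ * (Hᵀ * F + Fᵀ * H) * R) =
      trace ((2 • (G * Rᵀ) - 2 • (F * (R * Rᵀ)))ᵀ * H) := by
  have h₁ : trace (Rᵀ * Hᵀ * G) = trace (Gᵀ * H * R) := by
    rw [← trace_transpose]; simp [transpose_mul, Matrix.mul_assoc]
  have h₂ : trace (Rᵀ * (Hᵀ * F) * R) = trace (Rᵀ * (Fᵀ * H) * R) := by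
    rw [← trace_transpose]; simp [transpose_mul, Matrix.mul_assoc]
  have h₃ : trace (R * Gᵀ * H) = trace (Gᵀ * H * R) := by
    rw [Matrix.mul_assoc, trace_mul_comm]
  have h₄ : trace (R * Rᵀ * Fᵀ * H) = trace (Rᵀ * (Fᵀ * H) * R) := by
    rw [Matrix.mul_assoc, Matrix.mul_assoc, trace_mul_comm, Matrix.mul_assoc]
  simp only [two_smul, transpose_sub, transpose_add, transpose_mul, transpose_transpose,
    Matrix.sub_mul, Matrix.add_mul, Matrix.mul_add, trace_sub, trace_add, h₁, h₂]
  rw [h₃, h₄]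

theorem dha_gradient_general (T V k : ℕ)
    (G : Matrix (Fin T) (Fin k) ℝ)
    (ε : ℝ) (hε : 0 < ε)
    (F : Matrix (Fin T) (Fin V) ℝ)
    (R : Matrix (Fin V) (Fin k) ℝ)
    (hR : R = (Fᵀ * F + ε • (1 : Matrix (Fin V) (Fin V) ℝ))⁻¹ * (Fᵀ * G)) :
    ∀ H : Matrix (Fin T) (Fin V) ℝ,
      HasDerivAt
        (fun t : ℝ =>
          Matrix.trace (Gᵀ * ((F + t • H) *
            ((F + t • H)ᵀ * (F + t • H) + ε • (1 : Matrix (Fin V) (Fin V) ℝ))⁻¹ *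
            (F + t • H)ᵀ) * G))
        (Matrix.trace ((2 • (G * Rᵀ) - 2 • (F * (R * Rᵀ)))ᵀ * H)) 0 := by
  intro H
  have hline : HasDerivAt (fun t : ℝ => F + t • H) H 0 :=
    (((hasDerivAt_id' 0).smul_const H).const_add F).congr_deriv (one_smul ℝ H)
  have hZ := (hline.transpose_mul_regularizedProjection_mul G (R := R) hε
    (by rw [zero_smul, add_zero]; exact hR)).matrix_trace
  rw [zero_smul, add_zero, trace_variation_eq_trace_transpose_mul] at hZ
  exact hZ

/-- Lemma 3 of the DHA paper: with `Z(F) = tr(GᵀF(FᵀF+εI)⁻¹FᵀG)`, `GᵀG = I`, and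
`R = (FᵀF+εI)⁻¹FᵀG`, the gradient of `Z` at `F` is `M = 2GRᵀ − 2FRRᵀ`, i.e. the
directional derivative of `Z` at `F` along any `H` is `tr(Mᵀ H)`. -/
theorem dha_gradient (T V k : ℕ)
    (G : Matrix (Fin T) (Fin k) ℝ) (hG : Gᵀ * G = 1)
    (ε : ℝ) (hε : 0 < ε)
    (F : Matrix (Fin T) (Fin V) ℝ)
    (R : Matrix (Fin V) (Fin k) ℝ)
    (hR : R = (Fᵀ * F + ε • (1 : Matrix (Fin V) (Fin V) ℝ))⁻¹ * (Fᵀ * G)) :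
    ∀ H : Matrix (Fin T) (Fin V) ℝ,
      HasDerivAt
        (fun t : ℝ =>
          Matrix.trace (Gᵀ * ((F + t • H) *
            ((F + t • H)ᵀ * (F + t • H) + ε • (1 : Matrix (Fin V) (Fin V) ℝ))⁻¹ *
            (F + t • H)ᵀ) * G))
        (Matrix.trace ((2 • (G * Rᵀ) - 2 • (F * (R * Rᵀ)))ᵀ * H)) 0 :=
  dha_gradient_general T V k G ε hε F R hR
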